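/- arXiv:math/0701478 — 3 statements merged into one kernel-verified Lean document; each statement's English description precedes it below -/
import Mathlib

section
/- Let p ≥ 5 be a prime with p ≠ 5, and let r ≥ 1. Then there do not exist integers a, b, c, …, z (indexed by the divisors 1, p, p^2, …, p^r) satisfying both a + p·b + p^2·c + ⋯ + p^r·z = 0 and a + b + c + ⋯ + z = 4. -/
/-- For a prime `p ≥ 5` with `p ≠ 5` and any `r ≥ 1`, there is no integer tuple
`(r₀, …, r_r)` (the exponents of an eta-quotient, indexed by the divisors
`1, p, …, p^r`) satisfying both `∑ p^i * rᵢ = 0` and `∑ rᵢ = 4`. -/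
theorem no_weight_two_eta_quotient_exponents (p : ℕ) (hp : p.Prime) (hp5 : 5 ≤ p)
    (hpne : p ≠ 5) (r : ℕ) (hr : 1 ≤ r) :
    ¬ ∃ c : Fin (r + 1) → ℤ,
        (∑ i : Fin (r + 1), (p : ℤ) ^ (i : ℕ) * c i = 0) ∧
          (∑ i : Fin (r + 1), c i = 4) := by
  rintro ⟨c, h1, h2⟩
  have hp7 : 7 ≤ p := by
    rcases Nat.lt_or_ge p 7 with h | h
    · interval_cases p <;> simp_all <;> norm_num at hp
    · exact h
  have key : ∑ i : Fin (r + 1), ((p : ℤ) ^ (i : ℕ) - 1) * c i = -4 := by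
    simp only [sub_one_mul]
    rw [Finset.sum_sub_distrib, h1, h2]
    ring
  have hdvd : ((p : ℤ) - 1) ∣ (-4 : ℤ) := by
    rw [← key]
    apply Finset.dvd_sum
    intro i _
    exact Dvd.dvd.mul_right (by simpa using sub_dvd_pow_sub_pow (p:ℤ) 1 i) _
  have h6 : (6 : ℤ) ≤ (p : ℤ) - 1 := by
    have : (7:ℤ) ≤ (p:ℤ) := by exact_mod_cast hp7
    linarith
  have := Int.le_of_dvd (by norm_num : (0:ℤ) < 4) (dvd_neg.mp hdvd)
  linarith
end

section
/- For p = 5: there do not exist integers r_0, r_1, …, r_m with ∑_{i=0}^m 5^i r_i = 0, ∑_{i=0}^m r_i = 4, and ∑_{i odd} r_i even. -/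
/-- For `p = 5`: there is no integer tuple `(r₀, …, r_m)` with `∑ 5^i * rᵢ = 0`,
`∑ rᵢ = 4`, and `∑_{i odd} rᵢ` even (the last condition encodes triviality of the
character of the eta-quotient). -/
theorem no_weight_two_eta_quotient_level_five (m : ℕ) :
    ¬ ∃ c : Fin (m + 1) → ℤ,
        (∑ i : Fin (m + 1), (5 : ℤ) ^ (i : ℕ) * c i = 0) ∧
          (∑ i : Fin (m + 1), c i = 4) ∧
            Even (∑ i ∈ Finset.univ.filter (fun i : Fin (m + 1) => Odd (i : ℕ)), c i) := by
  rintro ⟨c, h1, h2, h3⟩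
  set S : ℤ := ∑ i : Fin (m + 1), (∑ j ∈ Finset.range (i : ℕ), (5 : ℤ) ^ j) * c i with hS
  have h4 : (4 : ℤ) * S = -4 := by
    rw [hS, Finset.mul_sum]
    have key : ∀ i ∈ (Finset.univ : Finset (Fin (m + 1))),
        (4 : ℤ) * ((∑ j ∈ Finset.range (i : ℕ), (5 : ℤ) ^ j) * c i)
          = (5 : ℤ) ^ (i : ℕ) * c i - c i := by
      intro i _
      have h := geom_sum_mul (5 : ℤ) (i : ℕ)
      norm_num at h
      linear_combination c i * h
    rw [Finset.sum_congr rfl key, Finset.sum_sub_distrib, h1, h2]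
    norm_num
  have hS1 : S = -1 := by linarith
  -- now reduce mod 2
  have h5 : ((S : ZMod 2)) = ∑ i ∈ Finset.univ.filter (fun i : Fin (m + 1) => Odd (i : ℕ)),
      ((c i : ZMod 2)) := by
    rw [hS]
    push_cast
    rw [Finset.sum_filter]
    apply Finset.sum_congr rfl
    intro i _
    have hin : (∑ j ∈ Finset.range (i : ℕ), ((5 : ZMod 2)) ^ j) = ((i : ℕ) : ZMod 2) := by
      have : (5 : ZMod 2) = 1 := by decide
      simp [this]
    rw [hin]
    rcases Nat.even_or_odd (i : ℕ) with he | ho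
    · rw [if_neg (by simpa [Nat.not_odd_iff_even] using he)]
      obtain ⟨k, hk⟩ := he
      rw [hk]
      push_cast
      rw [CharTwo.add_self_eq_zero, zero_mul]
    · rw [if_pos ho]
      obtain ⟨k, hk⟩ := ho
      rw [hk]
      push_cast
      rw [show ((2 : ZMod 2)) = 0 from by decide]
      ring
  have h6 : (∑ i ∈ Finset.univ.filter (fun i : Fin (m + 1) => Odd (i : ℕ)),
      ((c i : ZMod 2))) = 0 := by
    obtain ⟨k, hk⟩ := h3
    have : ((∑ i ∈ Finset.univ.filter (fun i : Fin (m + 1) => Odd (i : ℕ)), c i : ℤ) : ZMod 2)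
        = 0 := by rw [hk]; push_cast; rw [CharTwo.add_self_eq_zero]
    simpa [Int.cast_sum] using this
  rw [h6] at h5
  rw [hS1] at h5
  norm_num at h5
end

section
/- As formal power series, the square of the Jacobi theta function θ(q) = ∑_{n∈Z} q^{n^2} equals the eta quotient η(q^2)^{10}/(η(q)^4 η(q^4)^4): that is, (∑_{n∈Z} q^{n^2})^2 = ∏_{n≥1} (1−q^{2n})^{10} / (∏_{n≥1}(1−q^n)^4 ∏_{n≥1}(1−q^{4n})^4). -/
open PowerSeries

/-- The formal power series `∏_{n ≥ 1} (1 - q^(δ*n))` over `ℚ` (the Dedekind eta function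
at `q^δ`, without its fractional power of `q`). -/
noncomputable def etaQ (δ : ℕ) : PowerSeries ℚ :=
  PowerSeries.mk fun m => PowerSeries.coeff m
    (∏ n ∈ Finset.range (m + 1), (1 - PowerSeries.X ^ (δ * (n + 1))))

/-- The Jacobi theta function `θ(q) = ∑_{n ∈ ℤ} q^(n²)` as a formal power series: the
coefficient of `q^m` is the number of integers `n` with `n² = m`. -/
noncomputable def theta : PowerSeries ℚ :=
  PowerSeries.mk fun m => (Set.ncard {n : ℤ | n ^ 2 = (m : ℤ)} : ℚ)

/-!
Cauchy's q-binomial theorem `∏_{i<n} (y + z qⁱ) = ∑_k [n, k]_q q^(k choose 2) zᵏ y^(n-k)` at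
`q = X²`, `z = X`, `y = X^(2N)`, `n = 2N` is the finite Jacobi triple product
`∏_{i<N} (1 + X^(2i+1))² = ∑_{k ≤ 2N} [2N, k]_{X²} X^((k-N)²)`.
From `(q;q)_k (q;q)_(n-k) [n, k]_q = (q;q)_n` and the stabilisation of `(q;q)_m` modulo
`q^(m+1)`, `(X²;X²)_N [2N, k]_{X²} ≡ 1` modulo `X^(2(N - |k-N|) + 2)`, so
`θ ≡ (X²;X²)_N ∏_{i<N} (1 + X^(2i+1))²` modulo `X^(N+1)`.
Splitting `(q;q)_(2N) = (q²;q²)_N ∏_{i<N} (1 - q^(2i+1))` at `q = X` and `q = X²` turns this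
into `θ η(q)² η(q⁴)² ≡ η(q²)⁵` modulo every power of `X`, and squaring gives the eta quotient.
-/

open Finset

section QAnalogues

variable {R : Type*} [CommRing R] (q : R)

def qPochhammer (n : ℕ) : R := ∏ i ∈ range n, (1 - q ^ (i + 1))

def gaussBinom : ℕ → ℕ → R
  | _, 0 => 1
  | 0, _ + 1 => 0
  | n + 1, k + 1 => q ^ (n - k) * gaussBinom n k + gaussBinom n (k + 1)

@[simp]
lemma qPochhammer_zero : qPochhammer q 0 = 1 := prod_range_zero _

lemma qPochhammer_succ (n : ℕ) : qPochhammer q (n + 1) = qPochhammer q n * (1 - q ^ (n + 1)) :=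
  prod_range_succ _ _

@[simp]
lemma gaussBinom_zero_right (n : ℕ) : gaussBinom q n 0 = 1 := by cases n <;> rfl

lemma gaussBinom_succ_succ (n k : ℕ) :
    gaussBinom q (n + 1) (k + 1) = q ^ (n - k) * gaussBinom q n k + gaussBinom q n (k + 1) := rfl

lemma gaussBinom_eq_zero_of_lt {n k : ℕ} (h : n < k) : gaussBinom q n k = 0 := by
  induction n generalizing k with
  | zero => obtain ⟨k, rfl⟩ := Nat.exists_eq_add_one_of_ne_zero h.ne'; rfl
  | succ n ih =>
    obtain ⟨k, rfl⟩ := Nat.exists_eq_add_one_of_ne_zero (Nat.ne_zero_of_lt h)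
    rw [gaussBinom_succ_succ, ih (by omega), ih (by omega), mul_zero, add_zero]

@[simp]
lemma gaussBinom_self (n : ℕ) : gaussBinom q n n = 1 := by
  induction n with
  | zero => rfl
  | succ n ih => rw [gaussBinom_succ_succ, ih, gaussBinom_eq_zero_of_lt q n.lt_succ_self]; simp

lemma qPochhammer_mul_qPochhammer_mul_gaussBinom {n k : ℕ} (h : k ≤ n) :
    qPochhammer q k * qPochhammer q (n - k) * gaussBinom q n k = qPochhammer q n := by
  induction n generalizing k with
  | zero => obtain rfl := Nat.le_zero.mp h; simp
  | succ n ih =>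
    rcases k with _ | k
    · simp
    obtain rfl | hk := (Nat.le_of_succ_le_succ h).eq_or_lt
    · simp
    obtain ⟨a, rfl⟩ := Nat.exists_eq_add_of_lt hk
    have h₁ := ih (k := k) (by omega)
    have h₂ := ih (k := k + 1) (by omega)
    rw [show k + a + 1 - k = a + 1 by omega] at h₁
    rw [show k + a + 1 - (k + 1) = a by omega] at h₂
    rw [gaussBinom_succ_succ, show k + a + 1 + 1 - (k + 1) = a + 1 by omega,
      show k + a + 1 - k = a + 1 by omega, qPochhammer_succ q (k + a + 1)]
    rw [qPochhammer_succ q k] at h₂ ⊢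
    rw [qPochhammer_succ q a] at h₁ ⊢
    linear_combination (1 - q ^ (k + 1)) * q ^ (a + 1) * h₁ + (1 - q ^ (a + 1)) * h₂

lemma prod_add_mul_pow_eq_sum_gaussBinom (y z : R) (n : ℕ) :
    ∏ i ∈ range n, (y + z * q ^ i) =
      ∑ k ∈ range (n + 1), gaussBinom q n k * q ^ k.choose 2 * z ^ k * y ^ (n - k) := by
  induction n with
  | zero => simp
  | succ n ih =>
    rw [prod_range_succ, ih, mul_add, sum_mul, sum_mul, sum_range_succ' _ (n + 1)]
    simp only [gaussBinom_succ_succ, add_mul, sum_add_distrib]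
    rw [sum_range_succ (fun k => gaussBinom q n (k + 1) * _ * _ * _),
      sum_range_succ' (fun k => gaussBinom q n k * _ * _ * _ * y)]
    have hy : ∀ k ∈ range n, gaussBinom q n (k + 1) * q ^ (k + 1).choose 2 * z ^ (k + 1) *
        y ^ (n - (k + 1)) * y = gaussBinom q n (k + 1) * q ^ (k + 1).choose 2 * z ^ (k + 1) *
        y ^ (n + 1 - (k + 1)) := fun k hk => by
      rw [mul_assoc, ← pow_succ, show n - (k + 1) + 1 = n + 1 - (k + 1) by grind]
    have hz : ∀ k ∈ range (n + 1), gaussBinom q n k * q ^ k.choose 2 * z ^ k * y ^ (n - k) *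
        (z * q ^ n) = q ^ (n - k) * gaussBinom q n k * q ^ (k + 1).choose 2 * z ^ (k + 1) *
        y ^ (n + 1 - (k + 1)) := fun k hk => by
      have hq : q ^ (n - k) * q ^ k = q ^ n := by
        rw [← pow_add, Nat.sub_add_cancel (mem_range_succ_iff.mp hk)]
      rw [Nat.choose_succ_succ', Nat.choose_one_right, Nat.add_sub_add_right]
      linear_combination (-(gaussBinom q n k * q ^ k.choose 2 * z ^ (k + 1) * y ^ (n - k))) * hq
    rw [sum_congr rfl hy, sum_congr rfl hz, gaussBinom_eq_zero_of_lt q n.lt_succ_self]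
    simp only [Nat.reduceSubDiff, gaussBinom_zero_right, Nat.choose_zero_succ, pow_zero, mul_one,
      tsub_zero, one_mul, zero_mul, tsub_self, add_zero]
    ring

lemma qPochhammer_two_mul (N : ℕ) :
    qPochhammer q (2 * N) = qPochhammer (q ^ 2) N * ∏ i ∈ range N, (1 - q ^ (2 * i + 1)) := by
  induction N with
  | zero => simp
  | succ N ih =>
    rw [show 2 * (N + 1) = 2 * N + 1 + 1 by ring, qPochhammer_succ, qPochhammer_succ, ih,
      qPochhammer_succ, prod_range_succ]
    ring

lemma SModEq.cancel_left_of_smodEq_one {a b c : R} {s : ℕ} (ha : a ≡ 1 [SMOD Ideal.span {q}])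
    (h : a * b ≡ a * c [SMOD Ideal.span {q ^ s}]) : b ≡ c [SMOD Ideal.span {q ^ s}] := by
  rw [SModEq.sub_mem, Ideal.mem_span_singleton] at ha h ⊢
  rw [← mul_sub] at h
  induction s with
  | zero => simp
  | succ s ih =>
    have hd : q ^ s ∣ b - c := ih (dvd_trans (pow_dvd_pow q s.le_succ) h)
    have hsplit : b - c = a * (b - c) - (a - 1) * (b - c) := by ring
    rw [hsplit, pow_succ']
    exact dvd_sub (pow_succ' q s ▸ h) (mul_dvd_mul ha hd)

lemma qPochhammer_smodEq {M M' : ℕ} (h : M ≤ M') :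
    qPochhammer q M' ≡ qPochhammer q M [SMOD Ideal.span {q ^ (M + 1)}] := by
  induction M', h using Nat.le_induction with
  | base => rfl
  | succ M' hM' ih =>
    have hfactor : 1 - q ^ (M' + 1) ≡ 1 [SMOD Ideal.span {q ^ (M + 1)}] := by
      rw [SModEq.sub_mem, sub_sub_cancel_left, neg_mem_iff, Ideal.mem_span_singleton]
      exact pow_dvd_pow q (by omega)
    rw [qPochhammer_succ, ← mul_one (qPochhammer q M)]
    exact ih.mul hfactor

lemma qPochhammer_mul_gaussBinom_smodEq_one {n k M : ℕ} (hk : k ≤ n) (hM : min k (n - k) ≤ M) :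
    qPochhammer q M * gaussBinom q n k ≡ 1 [SMOD Ideal.span {q ^ (min k (n - k) + 1)}] := by
  set μ := min k (n - k)
  have hP : ∀ {j}, μ ≤ j → qPochhammer q j ≡ qPochhammer q μ [SMOD Ideal.span {q ^ (μ + 1)}] :=
    qPochhammer_smodEq q
  have hμ : qPochhammer q μ * (qPochhammer q μ * gaussBinom q n k) ≡ qPochhammer q μ * 1
      [SMOD Ideal.span {q ^ (μ + 1)}] :=
    calc _ = qPochhammer q μ * qPochhammer q μ * gaussBinom q n k := by ring
      _ ≡ qPochhammer q k * qPochhammer q (n - k) * gaussBinom q n k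
          [SMOD Ideal.span {q ^ (μ + 1)}] :=
        ((hP (min_le_left _ _)).symm.mul (hP (min_le_right _ _)).symm).mul SModEq.rfl
      _ = qPochhammer q n := qPochhammer_mul_qPochhammer_mul_gaussBinom q hk
      _ ≡ qPochhammer q μ [SMOD Ideal.span {q ^ (μ + 1)}] := hP (by omega)
      _ = _ := (mul_one _).symm
  have hunit : qPochhammer q μ ≡ 1 [SMOD Ideal.span {q}] := by
    simpa using qPochhammer_smodEq q (Nat.zero_le μ)
  exact ((hP hM).mul SModEq.rfl).trans (SModEq.cancel_left_of_smodEq_one q hunit hμ)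

end QAnalogues

section PowerSeries

variable {R : Type*} [CommRing R]

lemma PowerSeries.smodEq_X_pow_iff {f g : R⟦X⟧} {n : ℕ} :
    f ≡ g [SMOD Ideal.span {(X : R⟦X⟧) ^ n}] ↔ ∀ i < n, coeff i f = coeff i g := by
  simp_rw [SModEq.sub_mem, Ideal.mem_span_singleton, X_pow_dvd_iff, map_sub, sub_eq_zero]

lemma qPochhammer_X_pow_smodEq {δ M M' : ℕ} (hδ : 0 < δ) (h : M ≤ M') :
    qPochhammer ((X : R⟦X⟧) ^ δ) M' ≡ qPochhammer (X ^ δ) M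
      [SMOD Ideal.span {(X : R⟦X⟧) ^ (M + 1)}] := by
  refine (qPochhammer_smodEq _ h).mono (Ideal.span_singleton_le_span_singleton.mpr ?_)
  rw [← pow_mul]
  exact pow_dvd_pow X (Nat.le_mul_of_pos_left _ hδ)

lemma Finset.sum_range_two_mul_add_one (N : ℕ) : ∑ i ∈ range N, (2 * i + 1) = N ^ 2 := by
  induction N with
  | zero => rfl
  | succ N ih => rw [sum_range_succ, ih]; ring

lemma Nat.two_mul_choose_two_add_self (k : ℕ) : 2 * k.choose 2 + k = k ^ 2 := by
  induction k with
  | zero => rfl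
  | succ k ih => rw [Nat.choose_succ_succ', Nat.choose_one_right]; nlinarith [ih]

lemma prod_range_two_mul_X_pow_add (N : ℕ) :
    ∏ i ∈ range (2 * N), ((X : R⟦X⟧) ^ (2 * N) + X * (X ^ 2) ^ i) =
      X ^ (3 * N ^ 2) * (∏ i ∈ range N, (1 + X ^ (2 * i + 1))) ^ 2 := by
  have hlow : ∏ i ∈ range N, ((X : R⟦X⟧) ^ (2 * N) + X * (X ^ 2) ^ i) =
      X ^ (N ^ 2) * ∏ i ∈ range N, (1 + X ^ (2 * i + 1)) := by
    rw [← prod_range_reflect (fun i => 1 + X ^ (2 * i + 1)), ← sum_range_two_mul_add_one,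
      ← prod_pow_eq_pow_sum, ← prod_mul_distrib]
    refine prod_congr rfl fun i hi => ?_
    have hexp : 2 * N = 2 * i + 1 + (2 * (N - 1 - i) + 1) := by
      have := mem_range.mp hi; omega
    rw [hexp]
    ring
  have hhigh : ∏ i ∈ range N, ((X : R⟦X⟧) ^ (2 * N) + X * (X ^ 2) ^ (N + i)) =
      X ^ (2 * N ^ 2) * ∏ i ∈ range N, (1 + X ^ (2 * i + 1)) := by
    calc _ = ∏ i ∈ range N, ((X : R⟦X⟧) ^ (2 * N) * (1 + X ^ (2 * i + 1))) :=
          prod_congr rfl fun i _ => by ring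
      _ = _ := by rw [prod_mul_distrib, prod_const, card_range, ← pow_mul, sq, mul_assoc]
  rw [two_mul N, prod_range_add, ← two_mul, hlow, hhigh]
  ring

lemma prod_one_add_X_pow_odd_sq (N : ℕ) :
    (∏ i ∈ range N, (1 + (X : R⟦X⟧) ^ (2 * i + 1))) ^ 2 =
      ∑ k ∈ range (2 * N + 1), gaussBinom (X ^ 2) (2 * N) k * X ^ (((k : ℤ) - N).natAbs ^ 2) := by
  apply X_pow_mul_cancel (k := 3 * N ^ 2)
  rw [← prod_range_two_mul_X_pow_add, prod_add_mul_pow_eq_sum_gaussBinom, mul_sum]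
  refine sum_congr rfl fun k hk => ?_
  have hexp : 2 * k.choose 2 + k + 2 * N * (2 * N - k) = 3 * N ^ 2 + ((k : ℤ) - N).natAbs ^ 2 := by
    have hc := Nat.two_mul_choose_two_add_self k
    zify [mem_range_succ_iff.mp hk] at hc ⊢
    rw [sq_abs]
    linear_combination hc
  rw [← pow_mul, ← pow_mul, mul_assoc, mul_assoc, ← pow_add, ← pow_add, ← add_assoc, hexp, pow_add]
  ring

end PowerSeries

lemma coeff_etaQ (δ m : ℕ) : coeff m (etaQ δ) = coeff m (qPochhammer (X ^ δ) (m + 1)) := by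
  simp only [etaQ, coeff_mk, qPochhammer, pow_mul]

lemma etaQ_smodEq {δ : ℕ} (hδ : 0 < δ) (M : ℕ) :
    etaQ δ ≡ qPochhammer (X ^ δ) M [SMOD Ideal.span {(X : ℚ⟦X⟧) ^ (M + 1)}] := by
  refine smodEq_X_pow_iff.mpr fun i hi => ?_
  rw [coeff_etaQ]
  refine smodEq_X_pow_iff.mp ?_ i (lt_add_one i)
  exact (qPochhammer_X_pow_smodEq hδ i.le_succ).trans (qPochhammer_X_pow_smodEq hδ (by omega)).symm

lemma constantCoeff_etaQ {δ : ℕ} (hδ : 0 < δ) : constantCoeff (etaQ δ) = 1 := by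
  simpa using smodEq_X_pow_iff.mp (etaQ_smodEq hδ 0) 0 zero_lt_one

lemma theta_smodEq (N : ℕ) :
    theta ≡ ∑ k ∈ range (2 * N + 1), X ^ (((k : ℤ) - N).natAbs ^ 2)
      [SMOD Ideal.span {(X : ℚ⟦X⟧) ^ (N + 1)}] := by
  refine smodEq_X_pow_iff.mpr fun i hi => ?_
  have hinj : Function.Injective fun k : ℕ => (k : ℤ) - N := fun a b h => by simpa using h
  have hsq : {n : ℤ | n ^ 2 = i} = (fun k : ℕ => (k : ℤ) - N) ''
      ↑({k ∈ range (2 * N + 1) | i = ((k : ℤ) - N).natAbs ^ 2} : Finset ℕ) := by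
    ext n
    simp only [Set.mem_ofPred_eq, Set.mem_image, coe_filter, mem_range]
    constructor
    · intro hn
      have habs : n.natAbs ^ 2 = i := by zify; rwa [sq_abs]
      have hle := Nat.le_self_pow two_ne_zero n.natAbs
      have hshift : (((n + N).toNat : ℕ) : ℤ) - N = n := by omega
      exact ⟨(n + N).toNat, ⟨by omega, by rw [hshift, habs]⟩, hshift⟩
    · rintro ⟨k, ⟨-, hk⟩, rfl⟩
      zify at hk
      rw [hk, sq_abs]
  rw [theta, coeff_mk, map_sum]
  simp_rw [coeff_X_pow]
  rw [sum_boole, hsq, Set.ncard_image_of_injective _ hinj, Set.ncard_coe_finset]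

lemma theta_smodEq_qPochhammer_mul_sq (N : ℕ) :
    theta ≡ qPochhammer (X ^ 2) N * (∏ i ∈ range N, (1 + X ^ (2 * i + 1))) ^ 2
      [SMOD Ideal.span {(X : ℚ⟦X⟧) ^ (N + 1)}] := by
  refine (theta_smodEq N).trans ?_
  rw [prod_one_add_X_pow_odd_sq, mul_sum]
  refine SModEq.sum fun k hk => ?_
  have hk : k ≤ 2 * N := mem_range_succ_iff.mp hk
  set d := ((k : ℤ) - N).natAbs
  have hμ : min k (2 * N - k) + d = N := by omega
  have hgauss := qPochhammer_mul_gaussBinom_smodEq_one (X ^ 2 : ℚ⟦X⟧) hk (M := N) (by omega)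
  have hexp : N + 1 ≤ 2 * (min k (2 * N - k) + 1) + d ^ 2 := by
    have := Nat.le_self_pow two_ne_zero d
    omega
  rw [SModEq.sub_mem, Ideal.mem_span_singleton] at hgauss ⊢
  rw [dvd_sub_comm, ← mul_assoc, ← sub_one_mul]
  calc (X : ℚ⟦X⟧) ^ (N + 1) ∣ (X ^ 2) ^ (min k (2 * N - k) + 1) * X ^ d ^ 2 := by
        rw [← pow_mul, ← pow_add]; exact pow_dvd_pow X hexp
    _ ∣ _ := mul_dvd_mul_right hgauss _

lemma theta_mul_etaQ_sq_smodEq (N : ℕ) :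
    theta * (etaQ 1 ^ 2 * etaQ 4 ^ 2) ≡ etaQ 2 ^ 5 [SMOD Ideal.span {(X : ℚ⟦X⟧) ^ (N + 1)}] := by
  set F := ∏ i ∈ range N, (1 + (X : ℚ⟦X⟧) ^ (2 * i + 1))
  set O := ∏ i ∈ range N, (1 - (X : ℚ⟦X⟧) ^ (2 * i + 1))
  have h₁ : etaQ 1 ≡ qPochhammer (X ^ 2) N * O [SMOD Ideal.span {(X : ℚ⟦X⟧) ^ (N + 1)}] := by
    have h := etaQ_smodEq one_pos (2 * N)
    rw [pow_one, qPochhammer_two_mul] at h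
    exact h.mono (Ideal.span_singleton_le_span_singleton.mpr (pow_dvd_pow X (by omega)))
  have h₂ : etaQ 2 ≡ qPochhammer (X ^ 4) N * (O * F)
      [SMOD Ideal.span {(X : ℚ⟦X⟧) ^ (N + 1)}] := by
    have hOF : O * F = ∏ i ∈ range N, (1 - (X ^ 2 : ℚ⟦X⟧) ^ (2 * i + 1)) := by
      rw [← prod_mul_distrib]; exact prod_congr rfl fun i _ => by ring
    have h := etaQ_smodEq two_pos (2 * N)
    rw [qPochhammer_two_mul, ← pow_mul, ← hOF] at h
    exact h.mono (Ideal.span_singleton_le_span_singleton.mpr (pow_dvd_pow X (by omega)))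
  calc theta * (etaQ 1 ^ 2 * etaQ 4 ^ 2)
      ≡ qPochhammer (X ^ 2) N * F ^ 2 *
          ((qPochhammer (X ^ 2) N * O) ^ 2 * qPochhammer (X ^ 4) N ^ 2)
        [SMOD Ideal.span {(X : ℚ⟦X⟧) ^ (N + 1)}] :=
      (theta_smodEq_qPochhammer_mul_sq N).mul ((h₁.pow 2).mul ((etaQ_smodEq four_pos N).pow 2))
    _ = qPochhammer (X ^ 2) N ^ 3 * (qPochhammer (X ^ 4) N * (O * F)) ^ 2 := by ring
    _ ≡ etaQ 2 ^ 3 * etaQ 2 ^ 2 [SMOD Ideal.span {(X : ℚ⟦X⟧) ^ (N + 1)}] :=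
      ((etaQ_smodEq two_pos N).symm.pow 3).mul (h₂.symm.pow 2)
    _ = etaQ 2 ^ 5 := by ring

lemma theta_mul_etaQ_sq : theta * (etaQ 1 ^ 2 * etaQ 4 ^ 2) = etaQ 2 ^ 5 :=
  ext fun N => smodEq_X_pow_iff.mp (theta_mul_etaQ_sq_smodEq N) N (lt_add_one N)

/-- `θ(q)² = η(q²)^10 / (η(q)^4 η(q⁴)^4)` as formal power series. -/
theorem theta_sq_eq_eta_quotient :
    theta ^ 2 = etaQ 2 ^ 10 * (etaQ 1 ^ 4 * etaQ 4 ^ 4)⁻¹ := by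
  have hconst : constantCoeff (etaQ 1 ^ 4 * etaQ 4 ^ 4) ≠ 0 := by
    simp [constantCoeff_etaQ]
  rw [eq_mul_inv_iff_mul_eq hconst]
  linear_combination (theta * (etaQ 1 ^ 2 * etaQ 4 ^ 2) + etaQ 2 ^ 5) * theta_mul_etaQ_sq
end
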